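/- For all n ≥ 2 and k ≥ 1, the k-sided pancake network — the directed graph whose vertex set is CPERMS(n,k), with a directed edge from π to flip_j(π) for every π ∈ CPERMS(n,k) and every 1 ≤ j ≤ n — has a directed Hamilton cycle: there exists a cyclic ordering π_1, π_2, …, π_{k^n·n!} of all elements of CPERMS(n,k) such that for each i (indices modulo k^n·n!), π_{i+1} = flip_{j_i}(π_i) for some 1 ≤ j_i ≤ n. -/

import Mathlib

/-- Increment the colour of every symbol of a coloured pre-permutation by `s`, modulo `k`. -/
def colShift (k s : ℕ) (p : List (ℕ × ℕ)) : List (ℕ × ℕ) :=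
  p.map (fun x => (x.1, (x.2 + s) % k))

/-- The colour-incrementing prefix-reversal of length `j` (a "flip"):
reverse the first `j` symbols and increment their colours by 1 modulo `k`. -/
def cflip (k j : ℕ) (p : List (ℕ × ℕ)) : List (ℕ × ℕ) :=
  colShift k 1 (p.take j).reverse ++ p.drop j

/-- `p` is a `k`-coloured permutation of order `n`: its values are a permutation
of `{1,…,n}` and all its colours lie in `{0,…,k-1}`. -/
def IsCPerm (n k : ℕ) (p : List (ℕ × ℕ)) : Prop :=
  (p.map Prod.fst).Perm ((List.range n).map (· + 1)) ∧ ∀ x ∈ p, x.2 < k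

/-- `p` is a pre-perm: distinct values from `{1,…,n}`, colours in `{0,…,k-1}`. -/
def IsPrePerm (n k : ℕ) (p : List (ℕ × ℕ)) : Prop :=
  (p.map Prod.fst).Nodup ∧ ∀ x ∈ p, (1 ≤ x.1 ∧ x.1 ≤ n) ∧ x.2 < k

/-- The circular string `ρ(p) = p^{+(k-1)} · p^{+(k-2)} ⋯ p^{+0}`. -/
def rho (k : ℕ) (p : List (ℕ × ℕ)) : List (ℕ × ℕ) :=
  ((List.range k).reverse).flatMap (fun s => colShift k s p)

/-- `ρ(p)_i`: the length `j-1` contiguous subword of the circular string `ρ(p)`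
ending with `r_{i-1}` (1-based indices modulo `m = k·j`, where `j = p.length`). -/
def rhoSub (k : ℕ) (p : List (ℕ × ℕ)) (i : ℕ) : List (ℕ × ℕ) :=
  (List.range (p.length - 1)).map
    (fun t => (rho k p).getD ((i + t + k * p.length - p.length) % (k * p.length)) (0, 0))

/-- Fuel-indexed version of the recursive listing `Rec(p,k)`; `fuel = p.length`. -/
def RecAux (k : ℕ) : ℕ → List (ℕ × ℕ) → List (List (ℕ × ℕ))
  | 0, p => (List.range k).map (fun s => colShift k s p)
  | fuel + 1, p =>
    if p.length ≤ 1 then (List.range k).map (fun s => colShift k s p)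
    else ((List.range (k * p.length)).reverse).flatMap
      (fun i => (RecAux k fuel (rhoSub k p (i + 1))).map (fun q => q ++ [(rho k p).getD i (0, 0)]))

/-- The recursive listing `Rec(p,k)`:
`Rec(p₁,k) = p₁, p₁^{+1}, …, p₁^{+(k-1)}` when `p` has length 1, and
`Rec(p,k) = Rec(ρ(p)_m,k)·r_m, Rec(ρ(p)_{m-1},k)·r_{m-1}, …, Rec(ρ(p)_1,k)·r_1` otherwise. -/
def RecList (k : ℕ) (p : List (ℕ × ℕ)) : List (List (ℕ × ℕ)) :=
  RecAux k p.length p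

/-- The identity coloured permutation `1⁰2⁰⋯n⁰`. -/
def idPerm (n : ℕ) : List (ℕ × ℕ) := (List.range n).map (fun i => (i + 1, 0))

/-!
The Hamilton cycle is the recursive listing `Rec(p, k)` for `p = 1⁰2⁰⋯n⁰`. By induction on the
length `j` of `p`: `Rec(p, k)` lists each coloured permutation on the values of `p` exactly once,
consecutive entries differ by a flip, it starts at `p`, and `flip_j` sends its last entry back to
`p`. In the recursive step the block of `r_i` (the `i`-th symbol of the circular word `ρ(p)`)
runs from the length-`j` window of `ρ(p)` ending at `r_i` to an entry whose `flip_j` is the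
window ending at `r_{i-1}`, where the next block starts. Windows of `ρ(p)` are prefixes of
rotations of `ρ(p)`, and everything rests on one identity: rotating `ρ(p)` left by `(k-1)·j`
increments every colour.
-/

section ListLemmas

variable {α : Type*}

theorem List.getElem_flatten_replicate (l : List α) (n u : ℕ)
    (hu : u < (List.replicate n l).flatten.length) :
    (List.replicate n l).flatten[u] =
      l[u % l.length]'(Nat.mod_lt _ (List.length_pos_iff.mpr fun h => by simp [h] at hu)) := by
  induction n generalizing u with
  | zero => simp at hu
  | succ n ih =>
    simp only [List.replicate_succ, List.flatten_cons]
    by_cases hul : u < l.length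
    · simp only [List.getElem_append_left hul, Nat.mod_eq_of_lt hul]
    · rw [not_lt] at hul
      rw [List.getElem_append_right hul, ih]
      simp only [Nat.mod_eq_sub_mod hul]

theorem List.take_length_rotate_flatten_replicate (l : List α) {n : ℕ} (hn : 0 < n) (s : ℕ) :
    ((List.replicate n l).flatten.rotate s).take l.length = l.rotate s := by
  have hlen : ((List.replicate n l).flatten).length = n * l.length := by simp
  apply List.ext_getElem (by simp [hlen, Nat.le_mul_of_pos_left _ hn])
  intro t h₁ h₂
  have ht : t < l.length := by simpa using h₂
  rw [List.getElem_take, List.getElem_rotate, List.getElem_flatten_replicate, List.getElem_rotate]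
  simp only [hlen, Nat.mod_mod_of_dvd _ (dvd_mul_left _ _)]

theorem List.take_succ_rotate (l : List α) (s : ℕ) {n : ℕ} (hn : n < l.length) :
    (l.rotate s).take (n + 1) =
      (l.rotate s).take n ++ [l[(s + n) % l.length]'(Nat.mod_lt _ (by omega))] := by
  rw [List.take_add_one, List.getElem?_rotate hn, add_comm n, List.getElem?_eq_getElem]
  rfl

theorem List.take_succ_rotate_eq_cons (l : List α) (s : ℕ) {n : ℕ} (hn : n < l.length) :
    (l.rotate s).take (n + 1) =
      l[s % l.length]'(Nat.mod_lt _ (by omega)) :: (l.rotate (s + 1)).take n := by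
  apply List.ext_getElem (by simp; omega)
  intro t h₁ h₂
  rcases t with _ | t
  · simp
  · simp only [List.getElem_take, List.getElem_rotate, List.getElem_cons_succ]
    congr 2
    omega

theorem List.IsChain.rel_getD_succ_mod {R : α → α → Prop} {L : List α} (d : α)
    (hL : L.IsChain R) (hclose : ∀ a ∈ L.getLast?, ∀ b ∈ L.head?, R a b)
    {i : ℕ} (hi : i < L.length) : R (L.getD i d) (L.getD ((i + 1) % L.length) d) := by
  by_cases hi' : i + 1 < L.length
  · rw [Nat.mod_eq_of_lt hi', List.getD_eq_getElem _ _ hi, List.getD_eq_getElem _ _ hi']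
    exact hL.getElem i hi'
  · rw [show i + 1 = L.length by omega, Nat.mod_self, List.getD_eq_getElem _ _ hi,
      List.getD_eq_getElem _ _ (by omega)]
    apply hclose
    · rw [List.getLast?_eq_getElem?, List.getElem?_eq_getElem (by omega)]
      simp [show L.length - 1 = i by omega]
    · simp [List.head?_eq_getElem?]

theorem List.head?_flatMap_of_head?_eq_some {β : Type*} {l : List α} {f : α → List β} {a : α}
    (hl : l.head? = some a) (ha : f a ≠ []) :
    (l.flatMap f).head? = (f a).head? := by
  obtain ⟨l, rfl⟩ : ∃ l', l = a :: l' := by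
    cases l with
    | nil => simp at hl
    | cons b l' => exact ⟨l', by simp_all⟩
  rw [List.flatMap_cons, List.head?_append_of_ne_nil _ ha]

theorem List.getLast?_flatMap_of_getLast?_eq_some {β : Type*} {l : List α} {f : α → List β}
    {a : α} (hl : l.getLast? = some a) (ha : f a ≠ []) :
    (l.flatMap f).getLast? = (f a).getLast? := by
  obtain ⟨l, rfl⟩ := List.getLast?_eq_some_iff.mp hl
  rw [List.flatMap_append, List.flatMap_singleton, List.getLast?_append_of_ne_nil _ ha]

theorem List.isChain_flatMap_range_reverse {R : α → α → Prop} {B : ℕ → List α} {m : ℕ}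
    (hne : ∀ i < m, B i ≠ []) (hchain : ∀ i < m, (B i).IsChain R)
    (hlink : ∀ i, i + 1 < m → ∀ x ∈ (B (i + 1)).getLast?, ∀ y ∈ (B i).head?, R x y) :
    ((List.range m).reverse.flatMap B).IsChain R := by
  rw [List.flatMap_def, List.isChain_flatten, List.isChain_map, List.isChain_reverse,
    List.isChain_range]
  · refine ⟨?_, fun i hi => hlink i (by omega)⟩
    simp only [List.mem_map, List.mem_reverse, List.mem_range]
    rintro _ ⟨i, hi, rfl⟩
    exact hchain i hi
  · simp only [List.mem_map, List.mem_reverse, List.mem_range, not_exists, not_and]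
    exact fun i hi h => hne i hi h

end ListLemmas

theorem Nat.exists_lt_add_mod_eq {k : ℕ} (a : ℕ) {b : ℕ} (hb : b < k) :
    ∃ s < k, (a + s) % k = b := by
  refine ⟨(b + (k - a % k)) % k, Nat.mod_lt _ (by omega), ?_⟩
  have hmod := Nat.mod_lt a (show 0 < k by omega)
  have hdiv := Nat.div_add_mod a k
  rw [Nat.add_mod_mod, show a + (b + (k - a % k)) = b + k * (a / k + 1) by
    rw [Nat.mul_add]; omega, Nat.add_mul_mod_self_left, Nat.mod_eq_of_lt hb]

theorem Nat.sub_one_mul_add_self {k : ℕ} (hk : 0 < k) (j : ℕ) : (k - 1) * j + j = k * j := by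
  rw [← Nat.succ_mul, Nat.succ_eq_add_one, Nat.sub_add_cancel hk]

theorem Nat.eq_of_add_mod_eq_add_mod {k a s s' : ℕ} (hs : s < k) (hs' : s' < k)
    (h : (a + s) % k = (a + s') % k) : s = s' := by
  have h' : s ≡ s' [MOD k] := Nat.ModEq.add_left_cancel' a h
  rwa [Nat.ModEq, Nat.mod_eq_of_lt hs, Nat.mod_eq_of_lt hs'] at h'

section ColShift

variable {k : ℕ}

@[simp]
theorem length_colShift (s : ℕ) (p : List (ℕ × ℕ)) : (colShift k s p).length = p.length := by
  simp [colShift]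

@[simp]
theorem map_fst_colShift (s : ℕ) (p : List (ℕ × ℕ)) :
    (colShift k s p).map Prod.fst = p.map Prod.fst := by
  simp [colShift]

theorem colShift_append (s : ℕ) (p q : List (ℕ × ℕ)) :
    colShift k s (p ++ q) = colShift k s p ++ colShift k s q := by
  simp [colShift]

theorem colShift_colShift (a b : ℕ) (p : List (ℕ × ℕ)) :
    colShift k a (colShift k b p) = colShift k (a + b) p := by
  simp only [colShift, List.map_map]
  congr 1
  funext x
  simp [Nat.add_assoc, Nat.add_comm a b]

theorem colShift_self (p : List (ℕ × ℕ)) : colShift k k p = colShift k 0 p := by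
  simp [colShift]

theorem colShift_zero {p : List (ℕ × ℕ)} (h : ∀ x ∈ p, x.2 < k) : colShift k 0 p = p := by
  conv_rhs => rw [← List.map_id p]
  exact List.map_congr_left fun x hx => by simp [Nat.mod_eq_of_lt (h x hx)]

theorem colShift_one_colShift_pred (hk : 0 < k) {p : List (ℕ × ℕ)} (h : ∀ x ∈ p, x.2 < k) :
    colShift k 1 (colShift k (k - 1) p) = p := by
  rw [colShift_colShift, show 1 + (k - 1) = k by omega, colShift_self, colShift_zero h]

end ColShift

section CFlip

variable {k : ℕ}

theorem cflip_append_of_le_length {j : ℕ} {x : List (ℕ × ℕ)} (y : List (ℕ × ℕ))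
    (h : j ≤ x.length) : cflip k j (x ++ y) = cflip k j x ++ y := by
  rw [cflip, cflip, List.take_append_of_le_length h, List.drop_append_of_le_length h,
    List.append_assoc]

theorem cflip_length_succ_append_singleton (x : List (ℕ × ℕ)) (r : ℕ × ℕ) :
    cflip k (x.length + 1) (x ++ [r]) = colShift k 1 [r] ++ cflip k x.length x := by
  simp [cflip, colShift]

end CFlip


section Rho

variable {k : ℕ} {p : List (ℕ × ℕ)}

theorem length_rho : (rho k p).length = k * p.length := by
  simp [rho, List.length_flatMap, List.map_const']

theorem mem_rho (hk : 0 < k) {y : ℕ × ℕ} : y ∈ rho k p ↔ y.1 ∈ p.map Prod.fst ∧ y.2 < k := by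
  simp only [rho, colShift, List.mem_flatMap, List.mem_reverse, List.mem_range, List.mem_map]
  constructor
  · rintro ⟨s, -, x, hx, rfl⟩
    exact ⟨⟨x, hx, rfl⟩, Nat.mod_lt _ hk⟩
  · rintro ⟨⟨x, hx, hxy⟩, hy⟩
    obtain ⟨s, hs, hxs⟩ := Nat.exists_lt_add_mod_eq x.2 hy
    exact ⟨s, hs, x, hx, Prod.ext hxy hxs⟩

theorem map_fst_rho : (rho k p).map Prod.fst = (List.replicate k (p.map Prod.fst)).flatten := by
  simp only [rho, List.map_flatMap, map_fst_colShift]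
  simp [List.flatMap_def, List.map_const']

theorem nodup_rho (h : (p.map Prod.fst).Nodup) : (rho k p).Nodup := by
  rw [rho, List.nodup_flatMap, List.pairwise_reverse]
  refine ⟨fun s _ => List.Nodup.of_map Prod.fst (by rwa [map_fst_colShift]), ?_⟩
  refine List.nodup_range.imp_of_mem fun {s s'} hs hs' hne x hx hx' => hne ?_
  simp only [colShift, List.mem_map] at hx hx'
  obtain ⟨a, ha, rfl⟩ := hx
  obtain ⟨b, hb, hab⟩ := hx'
  obtain rfl : b = a := List.inj_on_of_nodup_map h hb ha (Prod.ext_iff.mp hab).1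
  exact Nat.eq_of_add_mod_eq_add_mod (List.mem_range.mp hs) (List.mem_range.mp hs')
    (Prod.ext_iff.mp hab).2

theorem take_length_rho (hk : 0 < k) : (rho k p).take p.length = colShift k (k - 1) p := by
  obtain ⟨k, rfl⟩ : ∃ k', k = k' + 1 := ⟨k - 1, by omega⟩
  simp [rho, List.range_succ, List.take_left']

theorem rotate_rho (hk : 0 < k) :
    (rho k p).rotate ((k - 1) * p.length) = colShift k 1 (rho k p) := by
  obtain ⟨k, rfl⟩ : ∃ k', k = k' + 1 := ⟨k - 1, by omega⟩
  set A := (List.range k).reverse.flatMap fun s => colShift (k + 1) (s + 1) p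
  have hrho : rho (k + 1) p = A ++ colShift (k + 1) 0 p := by
    simp [A, rho, List.range_succ_eq_map, ← List.map_reverse, List.flatMap_map]
  have hA : A.length = (k + 1 - 1) * p.length := by
    simp [A, List.length_flatMap, List.map_const']
  rw [hrho, ← hA, List.rotate_append_length_eq, ← hrho]
  simp only [rho, List.range_succ, List.reverse_append, List.reverse_singleton,
    List.singleton_append, List.flatMap_cons, colShift_append, colShift_colShift,
    show 1 + k = k + 1 from Nat.add_comm 1 k, colShift_self]
  congr 1
  simp only [colShift, List.map_flatMap, A, List.map_map]
  congr 1
  funext s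
  simp [Function.comp_def, Nat.add_assoc]

theorem rotate_rho_add_length (s : ℕ) :
    (rho k p).rotate (k * p.length + s) = (rho k p).rotate s := by
  rw [← List.rotate_rotate, ← length_rho, List.rotate_length]

theorem take_length_rotate_rho (hk : 0 < k) (hcol : ∀ x ∈ p, x.2 < k) :
    ((rho k p).rotate ((k - 1) * p.length)).take p.length = p := by
  rw [rotate_rho hk, colShift, ← List.map_take, ← colShift, take_length_rho hk,
    colShift_one_colShift_pred hk hcol]

theorem map_fst_take_length_rotate_rho (hk : 0 < k) (s : ℕ) :
    (((rho k p).rotate s).take p.length).map Prod.fst = (p.map Prod.fst).rotate s := by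
  rw [List.map_take, List.map_rotate, map_fst_rho, ← List.length_map (f := Prod.fst),
    List.take_length_rotate_flatten_replicate _ hk]

end Rho

section RhoSub

variable {k : ℕ} {p : List (ℕ × ℕ)}

theorem length_rhoSub (i : ℕ) :
    (rhoSub k p i).length = p.length - 1 := by
  simp [rhoSub]

theorem rhoSub_eq_take_rotate (hk : 0 < k) (i : ℕ) :
    rhoSub k p i = ((rho k p).rotate (i + (k - 1) * p.length)).take (p.length - 1) := by
  have hkj := Nat.sub_one_mul_add_self hk p.length
  apply List.ext_getElem (by simp [rhoSub, length_rho]; omega)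
  intro t h₁ h₂
  have ht : t < p.length - 1 := by simpa [rhoSub] using h₁
  have hm : 0 < k * p.length := by omega
  simp only [rhoSub, List.getElem_map, List.getElem_range, List.getElem_take,
    List.getElem_rotate, length_rho]
  rw [List.getD_eq_getElem _ _ (by rw [length_rho]; exact Nat.mod_lt _ hm)]
  congr 2
  omega

theorem rhoSub_succ_append_getD (hk : 0 < k) {i : ℕ} (hi : i < k * p.length) :
    rhoSub k p (i + 1) ++ [(rho k p).getD i (0, 0)] =
      ((rho k p).rotate (i + 1 + (k - 1) * p.length)).take p.length := by
  have hkj := Nat.sub_one_mul_add_self hk p.length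
  have hj : 0 < p.length := Nat.pos_of_mul_pos_left (show 0 < k * p.length by omega)
  conv_rhs => arg 1; rw [← Nat.sub_add_cancel hj]
  rw [List.take_succ_rotate _ _ (by rw [length_rho]; omega), rhoSub_eq_take_rotate hk,
    List.getD_eq_getElem _ _ (by rw [length_rho]; exact hi)]
  congr 3
  rw [length_rho, show i + 1 + (k - 1) * p.length + (p.length - 1) = i + k * p.length by omega,
    Nat.add_mod_right, Nat.mod_eq_of_lt hi]

theorem colShift_getD_append_rhoSub_succ (hk : 0 < k) {i : ℕ} (hi : i < k * p.length) :
    colShift k 1 [(rho k p).getD i (0, 0)] ++ rhoSub k p (i + 1) =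
      ((rho k p).rotate (i + (k - 1) * p.length)).take p.length := by
  have hkj := Nat.sub_one_mul_add_self hk p.length
  have hj : 0 < p.length := Nat.pos_of_mul_pos_left (show 0 < k * p.length by omega)
  have hshift : colShift k 1 [(rho k p).getD i (0, 0)] =
      [((rho k p).rotate ((k - 1) * p.length))[i]'(by simp [length_rho, hi])] := by
    simp only [rotate_rho hk, colShift, List.getElem_map,
      List.getD_eq_getElem _ _ (show i < (rho k p).length by rw [length_rho]; exact hi)]
    rfl
  conv_rhs => arg 1; rw [← Nat.sub_add_cancel hj]
  rw [List.take_succ_rotate_eq_cons _ _ (by rw [length_rho]; omega), hshift,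
    rhoSub_eq_take_rotate hk, List.getElem_rotate, Nat.add_right_comm i 1]
  rfl

theorem mem_rho_of_mem_rhoSub {i : ℕ} {x : ℕ × ℕ} (hk : 0 < k) (hx : x ∈ rhoSub k p i) :
    x ∈ rho k p := by
  rw [rhoSub_eq_take_rotate hk] at hx
  exact List.mem_rotate.mp (List.mem_of_mem_take hx)

theorem nodup_map_fst_rhoSub (hk : 0 < k) (hnd : (p.map Prod.fst).Nodup) (i : ℕ) :
    ((rhoSub k p i).map Prod.fst).Nodup := by
  rw [rhoSub_eq_take_rotate hk]
  refine ((List.take_sublist_take_left (Nat.sub_le _ 1)).map Prod.fst).nodup ?_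
  rw [map_fst_take_length_rotate_rho hk]
  exact List.nodup_rotate.mpr hnd

end RhoSub

@[elab_as_elim]
theorem rhoSub_induction (k : ℕ) {motive : List (ℕ × ℕ) → Prop}
    (singleton : ∀ x, motive [x])
    (step : ∀ p : List (ℕ × ℕ), 2 ≤ p.length → (∀ i, motive (rhoSub k p (i + 1))) → motive p) :
    ∀ p : List (ℕ × ℕ), p ≠ [] → motive p := by
  intro p hp
  induction h : p.length using Nat.strong_induction_on generalizing p with
  | _ n ih =>
    have hpos := List.length_pos_iff.mpr hp
    by_cases h1 : p.length = 1
    · obtain ⟨x, rfl⟩ := List.length_eq_one_iff.mp h1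
      exact singleton x
    · refine step p (by omega) fun i => ih _ (by rw [← h, length_rhoSub]; omega) _ ?_ rfl
      exact List.ne_nil_of_length_pos (by rw [length_rhoSub]; omega)

section RecList

variable {k : ℕ}

theorem recList_singleton (x : ℕ × ℕ) :
    RecList k [x] = (List.range k).map fun s => colShift k s [x] := by
  simp [RecList, RecAux]

/-- The block `Rec(ρ(p)_{i+1}, k) · r_i` of `Rec(p, k)`, with `r_i` indexed from `0` here. -/
def recBlock (k : ℕ) (p : List (ℕ × ℕ)) (i : ℕ) : List (List (ℕ × ℕ)) :=
  (RecList k (rhoSub k p (i + 1))).map (· ++ [(rho k p).getD i (0, 0)])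

theorem recList_eq_flatMap {p : List (ℕ × ℕ)} (hp : 2 ≤ p.length) :
    RecList k p = (List.range (k * p.length)).reverse.flatMap (recBlock k p) := by
  obtain ⟨f, hf⟩ : ∃ f, p.length = f + 1 := ⟨p.length - 1, by omega⟩
  have hsub : ∀ i, (rhoSub k p i).length = f := by simp [length_rhoSub, hf]
  rw [RecList, hf, RecAux, if_neg (by omega), ← hf]
  congr 1
  funext i
  rw [recBlock, RecList, hsub]

theorem length_recList {p : List (ℕ × ℕ)} (hp : p ≠ []) :
    (RecList k p).length = k ^ p.length * p.length.factorial := by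
  refine rhoSub_induction k (fun x => ?_) (fun p hp ih => ?_) p hp
  · simp [recList_singleton]
  · obtain ⟨j, hj⟩ : ∃ j, p.length = j + 1 := ⟨p.length - 1, by omega⟩
    simp only [recList_eq_flatMap hp, List.length_flatMap, recBlock, List.length_map, ih,
      length_rhoSub, hj, Nat.add_sub_cancel, List.map_const', List.sum_replicate,
      List.length_reverse, List.length_range, smul_eq_mul, Nat.factorial_succ, pow_succ]
    ring

theorem length_of_mem_recList {p q : List (ℕ × ℕ)} (hp : p ≠ []) (hq : q ∈ RecList k p) :
    q.length = p.length := by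
  refine rhoSub_induction k (motive := fun p => ∀ q ∈ RecList k p, q.length = p.length)
    (fun x => ?_) (fun p hp ih => ?_) p hp q hq
  · simp [recList_singleton]
  · intro q hq
    simp only [recList_eq_flatMap hp, recBlock, List.mem_flatMap, List.mem_map] at hq
    obtain ⟨i, -, q, hq, rfl⟩ := hq
    rw [List.length_append, ih i q hq, length_rhoSub, List.length_singleton]
    omega

end RecList

section FlipWalk

variable {k : ℕ}

def IsFlip (k : ℕ) (a b : List (ℕ × ℕ)) : Prop :=
  ∃ j, 1 ≤ j ∧ j ≤ a.length ∧ b = cflip k j a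

theorem IsFlip.append_right {a b : List (ℕ × ℕ)} (h : IsFlip k a b) (y : List (ℕ × ℕ)) :
    IsFlip k (a ++ y) (b ++ y) := by
  obtain ⟨j, hj, hja, rfl⟩ := h
  exact ⟨j, hj, by simp; omega, (cflip_append_of_le_length y hja).symm⟩

theorem isFlip_of_cflip_length_eq {a b : List (ℕ × ℕ)} (ha : a ≠ []) (h : cflip k a.length a = b) :
    IsFlip k a b :=
  ⟨a.length, List.length_pos_iff.mpr ha, le_rfl, h.symm⟩

def IsClosedFlipWalk (k : ℕ) (p : List (ℕ × ℕ)) (L : List (List (ℕ × ℕ))) : Prop :=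
  L.IsChain (IsFlip k) ∧ L.head? = some p ∧ ∀ q ∈ L.getLast?, cflip k p.length q = p

theorem isClosedFlipWalk_recList_singleton (hk : 0 < k) {x : ℕ × ℕ} (hx : x.2 < k) :
    IsClosedFlipWalk k [x] (RecList k [x]) := by
  have hflip : ∀ s, cflip k 1 (colShift k s [x]) = colShift k 1 (colShift k s [x]) := by
    simp [cflip, colShift]
  have hx' : ∀ y ∈ [x], y.2 < k := by simpa using hx
  refine ⟨?_, ?_, ?_⟩
  · rw [recList_singleton, List.isChain_map, List.isChain_range]
    intro s _
    refine isFlip_of_cflip_length_eq (by simp [colShift]) ?_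
    rw [length_colShift, List.length_singleton, hflip, colShift_colShift, Nat.add_comm]
  · simp [recList_singleton, List.head?_range, show k ≠ 0 by omega, colShift_zero hx']
  · simp only [recList_singleton, List.getLast?_map, List.getLast?_range,
      if_neg (show k ≠ 0 by omega), Option.map_some, Option.mem_def, Option.some.injEq, forall_eq']
    rw [List.length_singleton, hflip, colShift_one_colShift_pred hk hx']

theorem IsClosedFlipWalk.recBlock_spec (hk : 0 < k) {p : List (ℕ × ℕ)} (hp : 2 ≤ p.length) {i : ℕ}
    (hi : i < k * p.length)
    (h : IsClosedFlipWalk k (rhoSub k p (i + 1)) (RecList k (rhoSub k p (i + 1)))) :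
    (recBlock k p i).IsChain (IsFlip k) ∧
      (recBlock k p i).head? =
        some (((rho k p).rotate (i + 1 + (k - 1) * p.length)).take p.length) ∧
      ∀ q ∈ (recBlock k p i).getLast?, q.length = p.length ∧
        cflip k p.length q = ((rho k p).rotate (i + (k - 1) * p.length)).take p.length := by
  obtain ⟨hchain, hhead, hlast⟩ := h
  have hW : (rhoSub k p (i + 1)).length = p.length - 1 := length_rhoSub _
  refine ⟨?_, ?_, fun q hq => ?_⟩
  · rw [recBlock, List.isChain_map]
    exact hchain.imp fun a b hab => hab.append_right _
  · rw [recBlock, List.head?_map, hhead, Option.map_some, rhoSub_succ_append_getD hk hi]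
  · rw [recBlock, List.getLast?_map] at hq
    obtain ⟨q, hqW, rfl⟩ := Option.mem_map.mp hq
    have hqlen : q.length = p.length - 1 :=
      (length_of_mem_recList (List.ne_nil_of_length_pos (by omega))
        (List.mem_of_mem_getLast? hqW)).trans hW
    refine ⟨by simp; omega, ?_⟩
    calc cflip k p.length (q ++ [(rho k p).getD i (0, 0)])
        = cflip k (q.length + 1) (q ++ [(rho k p).getD i (0, 0)]) := by rw [hqlen]; congr; omega
      _ = colShift k 1 [(rho k p).getD i (0, 0)] ++ cflip k q.length q :=
        cflip_length_succ_append_singleton _ _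
      _ = colShift k 1 [(rho k p).getD i (0, 0)] ++ rhoSub k p (i + 1) := by
        rw [hqlen, ← hW, hlast q hqW]
      _ = _ := colShift_getD_append_rhoSub_succ hk hi

end FlipWalk

section Hamilton

variable {k : ℕ}

theorem isClosedFlipWalk_recList (hk : 0 < k) {p : List (ℕ × ℕ)} (hp : p ≠ [])
    (hcol : ∀ x ∈ p, x.2 < k) : IsClosedFlipWalk k p (RecList k p) := by
  refine rhoSub_induction k
    (motive := fun p => (∀ x ∈ p, x.2 < k) → IsClosedFlipWalk k p (RecList k p))
    (fun x hx => isClosedFlipWalk_recList_singleton hk (hx x (by simp)))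
    (fun p hp ih hcol => ?_) p hp hcol
  have hblock := fun i (hi : i < k * p.length) => IsClosedFlipWalk.recBlock_spec hk hp hi
    (ih i fun x hx => ((mem_rho hk).mp (mem_rho_of_mem_rhoSub hk hx)).2)
  have hm : 0 < k * p.length := Nat.mul_pos hk (by omega)
  have hne : ∀ i < k * p.length, recBlock k p i ≠ [] := fun i hi h => by
    simpa [h] using (hblock i hi).2.1
  rw [recList_eq_flatMap hp]
  refine ⟨?_, ?_, ?_⟩
  · refine List.isChain_flatMap_range_reverse hne (fun i hi => (hblock i hi).1)
      fun i hi x hx y hy => ?_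
    obtain ⟨hxlen, hx⟩ := (hblock (i + 1) hi).2.2 x hx
    rw [(hblock i (by omega)).2.1, Option.mem_some_iff] at hy
    exact isFlip_of_cflip_length_eq (List.ne_nil_of_length_pos (by omega)) (by rw [hxlen, hx, ← hy])
  · have hhead : (List.range (k * p.length)).reverse.head? = some (k * p.length - 1) := by
      rw [List.head?_reverse, List.getLast?_range, if_neg hm.ne']
    rw [List.head?_flatMap_of_head?_eq_some hhead (hne _ (by omega)), (hblock _ (by omega)).2.1,
      show k * p.length - 1 + 1 = k * p.length by omega, rotate_rho_add_length,
      take_length_rotate_rho hk hcol]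
  · have hlast : (List.range (k * p.length)).reverse.getLast? = some 0 := by
      rw [List.getLast?_reverse, List.head?_range, if_neg hm.ne']
    rw [List.getLast?_flatMap_of_getLast?_eq_some hlast (hne 0 hm)]
    intro q hq
    rw [((hblock 0 hm).2.2 q hq).2, zero_add, take_length_rotate_rho hk hcol]

theorem nodup_recList (hk : 0 < k) {p : List (ℕ × ℕ)} (hp : p ≠ [])
    (hnd : (p.map Prod.fst).Nodup) : (RecList k p).Nodup := by
  refine rhoSub_induction k (motive := fun p => (p.map Prod.fst).Nodup → (RecList k p).Nodup)
    (fun x _ => ?_) (fun p hp ih hnd => ?_) p hp hnd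
  · rw [recList_singleton]
    refine List.nodup_range.map_on fun s hs s' hs' h => ?_
    simp only [colShift, List.map_cons, List.map_nil, List.cons.injEq, Prod.mk.injEq,
      true_and, and_true] at h
    exact Nat.eq_of_add_mod_eq_add_mod (List.mem_range.mp hs) (List.mem_range.mp hs') h
  rw [recList_eq_flatMap hp, List.nodup_flatMap, List.pairwise_reverse]
  refine ⟨fun i _ => (ih i (nodup_map_fst_rhoSub hk hnd _)).map (List.append_left_injective _),
    List.nodup_range.imp_of_mem fun {a b} ha hb hab q hqb hqa => hab ?_⟩
  simp only [recBlock, List.mem_map] at hqa hqb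
  obtain ⟨u, -, rfl⟩ := hqa
  obtain ⟨v, -, huv⟩ := hqb
  have hr := (List.append_inj' huv rfl).2
  simp only [List.cons.injEq, and_true] at hr
  have hlen : ∀ {i}, i ∈ List.range (k * p.length) → i < (rho k p).length := fun hi => by
    rw [length_rho]; exact List.mem_range.mp hi
  rw [List.getD_eq_getElem _ _ (hlen ha), List.getD_eq_getElem _ _ (hlen hb),
    (nodup_rho hnd).getElem_inj_iff] at hr
  exact hr.symm

theorem mem_recList (hk : 0 < k) {p q : List (ℕ × ℕ)} (hp : p ≠ [])
    (hnd : (p.map Prod.fst).Nodup) (hq : (q.map Prod.fst).Perm (p.map Prod.fst))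
    (hqcol : ∀ x ∈ q, x.2 < k) : q ∈ RecList k p := by
  refine rhoSub_induction k (motive := fun p => (p.map Prod.fst).Nodup →
      ∀ q : List (ℕ × ℕ), (q.map Prod.fst).Perm (p.map Prod.fst) → (∀ x ∈ q, x.2 < k) →
        q ∈ RecList k p)
    (fun x _ q hq hqcol => ?_) (fun p hp ih hnd q hq hqcol => ?_) p hp hnd q hq hqcol
  · obtain ⟨y, rfl, hyx⟩ := List.map_eq_singleton_iff.mp (List.perm_singleton.mp hq)
    obtain ⟨s, hs, hxs⟩ := Nat.exists_lt_add_mod_eq x.2 (hqcol y (by simp))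
    rw [recList_singleton, List.mem_map]
    exact ⟨s, List.mem_range.mpr hs, by simp [colShift, ← hyx, hxs]⟩
  obtain ⟨q, y, rfl⟩ : ∃ q' y, q = q' ++ [y] := by
    refine (q.eq_nil_or_concat').resolve_left fun h => ?_
    have := hq.length_eq
    simp [h] at this
    omega
  have hy : y ∈ rho k p := (mem_rho hk).mpr
    ⟨hq.subset (by simp), hqcol y (by simp)⟩
  obtain ⟨i, hi, rfl⟩ := List.getElem_of_mem hy
  have hi' : i < k * p.length := length_rho (k := k) ▸ hi
  have hwindow := map_fst_take_length_rotate_rho (p := p) hk (i + 1 + (k - 1) * p.length)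
  rw [← rhoSub_succ_append_getD hk hi', List.getD_eq_getElem _ _ hi] at hwindow
  rw [recList_eq_flatMap hp, List.mem_flatMap]
  refine ⟨i, List.mem_reverse.mpr (List.mem_range.mpr hi'), ?_⟩
  rw [recBlock, List.mem_map, List.getD_eq_getElem _ _ hi]
  refine ⟨q, ih i (nodup_map_fst_rhoSub hk hnd _) q ?_
    (fun x hx => hqcol x (by simp [hx])), rfl⟩
  simp only [List.map_append, List.map_cons, List.map_nil] at hq hwindow
  rw [← List.perm_append_right_iff [((rho k p)[i]).1], hwindow]
  exact hq.trans (List.rotate_perm _ _).symm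

end Hamilton

theorem IsClosedFlipWalk.isFlip_getD_succ_mod {k : ℕ} {p : List (ℕ × ℕ)}
    {L : List (List (ℕ × ℕ))} (h : IsClosedFlipWalk k p L) (hp : p ≠ [])
    (hlen : ∀ q ∈ L, q.length = p.length) {i : ℕ} (hi : i < L.length) :
    IsFlip k (L.getD i []) (L.getD ((i + 1) % L.length) []) := by
  obtain ⟨hchain, hhead, hlast⟩ := h
  refine hchain.rel_getD_succ_mod [] (fun a ha b hb => ?_) hi
  have ha' := hlen a (List.mem_of_mem_getLast? ha)
  rw [hhead, Option.mem_some_iff] at hb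
  subst hb
  exact isFlip_of_cflip_length_eq (List.ne_nil_of_length_pos (ha' ▸ List.length_pos_iff.mpr hp))
    (ha' ▸ hlast a ha)

theorem length_idPerm (n : ℕ) : (idPerm n).length = n := by
  simp [idPerm]

theorem map_fst_idPerm (n : ℕ) : (idPerm n).map Prod.fst = (List.range n).map (· + 1) := by
  simp [idPerm, Function.comp_def]

/-- For `n ≥ 2`, `k ≥ 1`, the `k`-sided pancake network (the directed
graph on `CPERMS(n,k)` with an edge from `π` to `flip_j(π)` for each `1 ≤ j ≤ n`) has a
directed Hamilton cycle: there is a cyclic ordering of all `kⁿ·n!` coloured permutations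
in which each one is followed by a flip of it. -/
theorem ksided_pancake_hamilton (n k : ℕ) (hn : 2 ≤ n) (hk : 1 ≤ k) :
    ∃ L : List (List (ℕ × ℕ)),
      L.length = k ^ n * n.factorial ∧
      (∀ q, IsCPerm n k q → L.count q = 1) ∧
      ∀ i < L.length, ∃ j, 1 ≤ j ∧ j ≤ n ∧
        L.getD ((i + 1) % L.length) [] = cflip k j (L.getD i []) := by
  have hp : idPerm n ≠ [] := List.ne_nil_of_length_pos (by rw [length_idPerm]; omega)
  have hcol : ∀ x ∈ idPerm n, x.2 < k := by simp [idPerm]; omega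
  have hnd : ((idPerm n).map Prod.fst).Nodup := by
    rw [map_fst_idPerm]
    exact List.nodup_range.map (add_left_injective 1)
  have hlen : ∀ q ∈ RecList k (idPerm n), q.length = n := fun q hq => by
    rw [length_of_mem_recList hp hq, length_idPerm]
  refine ⟨RecList k (idPerm n), by rw [length_recList hp, length_idPerm], fun q hq => ?_,
    fun i hi => ?_⟩
  · rw [IsCPerm, ← map_fst_idPerm] at hq
    exact List.count_eq_one_of_mem (nodup_recList hk hp hnd) (mem_recList hk hp hnd hq.1 hq.2)
  · obtain ⟨j, hj, hjlen, hflip⟩ := (isClosedFlipWalk_recList hk hp hcol).isFlip_getD_succ_mod hp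
      (fun q hq => (hlen q hq).trans (length_idPerm n).symm) hi
    rw [List.getD_eq_getElem _ _ hi, hlen _ (List.getElem_mem hi)] at hjlen
    exact ⟨j, hj, hjlen, hflip⟩
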